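/- arXiv:2412.18522 — 2 statements merged into one kernel-verified Lean document; each statement's English description precedes it below -/
import Mathlib

section
/- For any element e and element set E, the SHARQ score of e, defined as a sum over all valid coalitions S ⊆ E (subsets with pairwise-distinct attributes not containing attr(e)) of the Shapley weight |S|!(|E|-|S|-1)!/|E|! times (I(R_{S∪{e}}) - I(R_S)), equals the optimized SHARQ* score, which restricts the sum to coalitions S that are subsets of the element set of some rule r with |S| ≥ |E(r)| - 1 and attr(e) ∉ attr(S). -/
/-- SHARQ equals SHARQ*: the Shapley-weighted sum over all valid coalitions equals the
sum restricted to the optimized coalitions (subsets of some rule's element set missing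
at most one element). -/
theorem sharq_eq_sharq_star {α β : Type*} [DecidableEq α] [DecidableEq β]
    (attr : α → β) (E : Finset α) (e : α)
    (R : Finset (Finset α)) (I : Finset (Finset α) → ℝ)
    (hI : I ∅ = 0) :
    ∑ S ∈ E.powerset.filter (fun S =>
        (S.image attr).card = S.card ∧ attr e ∉ S.image attr),
      (S.card.factorial * (E.card - S.card - 1).factorial : ℝ) / (E.card.factorial : ℝ) *
        (I (R.filter (fun r => r = insert e S)) - I (R.filter (fun r => r = S)))
    = ∑ S ∈ E.powerset.filter (fun S =>
        (S.image attr).card = S.card ∧ attr e ∉ S.image attr ∧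
        ∃ r ∈ R, S ⊆ r ∧ r.card - 1 ≤ S.card),
      (S.card.factorial * (E.card - S.card - 1).factorial : ℝ) / (E.card.factorial : ℝ) *
        (I (R.filter (fun r => r = insert e S)) - I (R.filter (fun r => r = S))) := by
  refine (Finset.sum_subset ?_ ?_).symm
  · intro S hS
    simp only [Finset.mem_filter] at hS ⊢
    tauto
  · intro S hS hS'
    simp only [Finset.mem_filter, Finset.mem_powerset] at hS hS'
    have hnone : ∀ r ∈ R, ¬(S ⊆ r ∧ r.card - 1 ≤ S.card) := by
      intro r hr h
      exact hS' ⟨hS.1, hS.2.1, hS.2.2, r, hr, h⟩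
    have h1 : R.filter (fun r => r = S) = ∅ := by
      rw [Finset.filter_eq_empty_iff]
      intro r hr heq
      exact hnone r hr (by subst heq; exact ⟨le_refl _, by omega⟩)
    have h2 : R.filter (fun r => r = insert e S) = ∅ := by
      rw [Finset.filter_eq_empty_iff]
      intro r hr heq
      refine hnone r hr ⟨heq ▸ Finset.subset_insert e S, ?_⟩
      subst heq
      have := Finset.card_insert_le e S
      omega
    rw [h1, h2, hI, sub_zero, mul_zero]
end

section
/- The number of valid coalitions for an element e with respect to element set E equals the product over all attributes a ∈ attr(E) \ {attr(e)} of (|E_a| + 1), where E_a is the set of elements of E with attribute a. -/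
open Finset

private lemma coalition_aux {α β : Type*} [DecidableEq α] [DecidableEq β]
    (attr : α → β) (E : Finset α) : ∀ (B : Finset β),
    (E.powerset.filter (fun S =>
        (S.image attr).card = S.card ∧ ∀ b ∈ B, b ∉ S.image attr)).card
    = ∏ a ∈ (E.image attr) \ B,
        ((E.filter (fun x => attr x = a)).card + 1) := by
  induction E using Finset.induction_on with
  | empty => intro B; simp [Finset.filter_singleton]
  | @insert x E hx ih =>
    intro B
    set F := (insert x E).powerset.filter (fun S =>
        (S.image attr).card = S.card ∧ ∀ b ∈ B, b ∉ S.image attr) with hF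
    have hsplit : F.card = (F.filter (fun S => x ∈ S)).card
        + (F.filter (fun S => x ∉ S)).card :=
      (Finset.card_filter_add_card_filter_not (fun S => x ∈ S)).symm
    have hwithout : F.filter (fun S => x ∉ S)
        = E.powerset.filter (fun S =>
            (S.image attr).card = S.card ∧ ∀ b ∈ B, b ∉ S.image attr) := by
      ext S
      simp only [hF, Finset.mem_filter, Finset.mem_powerset]
      constructor
      · rintro ⟨⟨h1, h2⟩, h3⟩
        exact ⟨(Finset.subset_insert_iff_of_notMem h3).mp h1, h2⟩
      · rintro ⟨h1, h2⟩
        exact ⟨⟨h1.trans (Finset.subset_insert x E), h2⟩, fun h => hx (h1 h)⟩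
    by_cases hxB : attr x ∈ B
    · -- with-x part is empty
      have hempty : F.filter (fun S => x ∈ S) = ∅ := by
        rw [Finset.filter_eq_empty_iff]
        rintro S hS hxS
        simp only [hF, Finset.mem_filter] at hS
        exact hS.2.2 (attr x) hxB (Finset.mem_image_of_mem attr hxS)
      rw [hsplit, hempty, Finset.card_empty, Nat.zero_add, hwithout, ih B]
      have himgE : (insert x E).image attr = insert (attr x) (E.image attr) :=
        Finset.image_insert attr x E
      rw [himgE, Finset.insert_sdiff_of_mem _ hxB]
      apply Finset.prod_congr rfl
      intro a ha
      have hax : a ≠ attr x := fun h => (Finset.mem_sdiff.mp ha).2 (h ▸ hxB)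
      rw [Finset.filter_insert, if_neg (fun h => hax h.symm)]
    have hwith : (F.filter (fun S => x ∈ S)).card
        = (E.powerset.filter (fun S =>
            (S.image attr).card = S.card ∧
              ∀ b ∈ insert (attr x) B, b ∉ S.image attr)).card := by
      apply Finset.card_bij (fun S _ => S.erase x)
      · rintro S hS
        simp only [hF, Finset.mem_filter, Finset.mem_powerset] at hS ⊢
        obtain ⟨⟨hsub, hcard, hB⟩, hxS⟩ := hS
        have hxmem : attr x ∈ S.image attr := Finset.mem_image_of_mem attr hxS
        have herase_sub : S.erase x ⊆ E := by
          intro y hy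
          obtain ⟨hyx, hyS⟩ := Finset.mem_erase.mp hy
          rcases Finset.mem_insert.mp (hsub hyS) with h | h
          · exact absurd h hyx
          · exact h
        have hinj : Set.InjOn attr S := by
          rw [← Finset.card_image_iff] at *; exact hcard
        have himg : (S.erase x).image attr = (S.image attr).erase (attr x) := by
          ext b
          simp only [Finset.mem_image, Finset.mem_erase]
          constructor
          · rintro ⟨y, ⟨hyx, hyS⟩, rfl⟩
            exact ⟨fun h => hyx (hinj hyS hxS h), y, hyS, rfl⟩
          · rintro ⟨hb, y, hyS, rfl⟩
            exact ⟨y, ⟨fun h => hb (h ▸ rfl), hyS⟩, rfl⟩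
        refine ⟨herase_sub, ?_, ?_⟩
        · rw [himg, Finset.card_erase_of_mem hxmem, Finset.card_erase_of_mem hxS, hcard]
        · intro b hb
          rcases Finset.mem_insert.mp hb with rfl | hbB
          · rw [himg]; exact Finset.notMem_erase _ _
          · rw [himg]
            intro hmem
            exact hB b hbB (Finset.mem_of_mem_erase hmem)
      · -- injectivity
        rintro S hS S' hS' heq
        simp only [hF, Finset.mem_filter] at hS hS'
        rw [← Finset.insert_erase hS.2, ← Finset.insert_erase hS'.2, heq]
      · -- surjectivity
        rintro T hT
        simp only [Finset.mem_filter, Finset.mem_powerset] at hT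
        obtain ⟨hsub, hcard, hB⟩ := hT
        have hxT : x ∉ T := fun h => hx (hsub h)
        have haxT : attr x ∉ T.image attr := hB _ (Finset.mem_insert_self _ _)
        refine ⟨insert x T, ?_, ?_⟩
        · simp only [hF, Finset.mem_filter, Finset.mem_powerset]
          refine ⟨⟨Finset.insert_subset_insert x hsub, ?_, ?_⟩,
            Finset.mem_insert_self x T⟩
          · rw [Finset.image_insert, Finset.card_insert_of_notMem haxT,
              Finset.card_insert_of_notMem hxT, hcard]
          · intro b hbB
            rw [Finset.image_insert, Finset.mem_insert]
            rintro (hbax | h)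
            · exact hxB (hbax ▸ hbB)
            · exact hB b (Finset.mem_insert_of_mem hbB) h
        · rw [Finset.erase_insert hxT]
    rw [hsplit, hwithout, hwith, ih B, ih (insert (attr x) B)]
    -- now pure product manipulation
    have himgE : (insert x E).image attr = insert (attr x) (E.image attr) :=
      Finset.image_insert attr x E
    have hfilt : ∀ a, a ≠ attr x →
        (insert x E).filter (fun y => attr y = a) = E.filter (fun y => attr y = a) := by
      intro a ha
      rw [Finset.filter_insert, if_neg (fun h => ha h.symm)]
    set B' := insert (attr x) B with hB'
    have hsd : E.image attr \ B' = (E.image attr \ B).erase (attr x) := by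
      rw [hB', Finset.sdiff_insert]
    have haxnot : attr x ∉ E.image attr \ B' := by
      rw [hsd]; exact Finset.notMem_erase _ _
    have hPeq : (∏ a ∈ E.image attr \ B',
        (((insert x E).filter (fun y => attr y = a)).card + 1))
        = ∏ a ∈ E.image attr \ B', ((E.filter (fun y => attr y = a)).card + 1) := by
      apply Finset.prod_congr rfl
      intro a ha
      have hax : a ≠ attr x := fun h => haxnot (h ▸ ha)
      rw [hfilt a hax]
    set P : ℕ := ∏ a ∈ E.image attr \ B', ((E.filter (fun y => attr y = a)).card + 1)
      with hPdef
    set k : ℕ := (E.filter (fun y => attr y = attr x)).card with hk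
    have hkx : ((insert x E).filter (fun y => attr y = attr x)).card = k + 1 := by
      rw [Finset.filter_insert, if_pos rfl, Finset.card_insert_of_notMem
        (fun h => hx (Finset.mem_of_mem_filter x h))]
    have hRHS : ∏ a ∈ (insert x E).image attr \ B,
        (((insert x E).filter (fun y => attr y = a)).card + 1) = (k + 2) * P := by
      rw [himgE, Finset.insert_sdiff_of_notMem _ hxB]
      have : insert (attr x) (E.image attr \ B) = insert (attr x) (E.image attr \ B') := by
        rw [hsd]
        ext b
        simp only [Finset.mem_insert, Finset.mem_erase]
        constructor
        · rintro (rfl | h); · exact Or.inl rfl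
          · by_cases hb : b = attr x
            · exact Or.inl hb
            · exact Or.inr ⟨hb, h⟩
        · rintro (rfl | ⟨_, h⟩); · exact Or.inl rfl
          · exact Or.inr h
      rw [this, Finset.prod_insert haxnot, hkx, hPeq]
    rw [hRHS]
    by_cases hxE : attr x ∈ E.image attr
    · have himsplit : E.image attr \ B = insert (attr x) (E.image attr \ B') := by
        rw [hsd, Finset.insert_erase (Finset.mem_sdiff.mpr ⟨hxE, hxB⟩)]
      rw [himsplit, Finset.prod_insert haxnot]
      ring
    · have hk0 : k = 0 := by
        rw [hk, Finset.card_eq_zero, Finset.filter_eq_empty_iff]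
        intro y hy h
        exact hxE (h ▸ Finset.mem_image_of_mem attr hy)
      have himsame : E.image attr \ B = E.image attr \ B' := by
        rw [hsd]
        apply (Finset.erase_eq_of_notMem _).symm
        exact fun h => hxE (Finset.mem_sdiff.mp h).1
      rw [himsame, hk0]
      ring

/-- The number of valid coalitions for `e` equals the product, over all attributes
`a ∈ attr(E) \ {attr e}`, of `|E_a| + 1`. -/
theorem card_valid_coalitions {α β : Type*} [DecidableEq α] [DecidableEq β]
    (attr : α → β) (E : Finset α) (e : α) :
    (E.powerset.filter (fun S =>
        (S.image attr).card = S.card ∧ attr e ∉ S.image attr)).card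
    = ∏ a ∈ (E.image attr).erase (attr e),
        ((E.filter (fun x => attr x = a)).card + 1) := by
  have h := coalition_aux attr E {attr e}
  simp only [Finset.mem_singleton, forall_eq] at h
  rw [h, Finset.sdiff_singleton_eq_erase]
end
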